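/- arXiv:1606.09377 — 4 statements merged into one kernel-verified Lean document; each statement's English description precedes it below -/
import Mathlib

section
/- Let F : A ⥤ B be a functor with a right adjoint R. If there exists any natural isomorphism (not necessarily the unit of the adjunction) between the composite functor F ⋙ R : A ⥤ A and the identity functor on A, then the unit η : id_A ⟶ F ⋙ R of the adjunction is itself a natural isomorphism; in particular, F is fully faithful. -/
open CategoryTheory

/-- If `F : A ⥤ B` has a right adjoint `R` and there exists *any* natural isomorphism
`F ⋙ R ≅ 𝟭 A` (not necessarily the unit), then the unit of the adjunction is an
isomorphism; in particular `F` is fully faithful. -/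
theorem unit_isIso_of_iso {A B : Type*} [Category A] [Category B]
    (F : A ⥤ B) (R : B ⥤ A) (adj : F ⊣ R) (e : F ⋙ R ≅ 𝟭 A) :
    IsIso adj.unit ∧ F.Full ∧ F.Faithful := by
  have h := adj.isIso_unit_of_iso e
  exact ⟨h, (adj.fullyFaithfulLOfCompIsoId e).full, (adj.fullyFaithfulLOfCompIsoId e).faithful⟩
end

section
/- Let F : A ⥤ B be an exact functor between triangulated categories with left adjoint L and right adjoint R, and suppose: (a) the canonical natural transformation R → RFL → CL[1] (given by Rη_L followed by γ_R L, where γ_R comes from the cotwist triangle) is an isomorphism, and (b) the cotwist C is an autoequivalence of A. Then the natural transformation LT[-1] → LFR → R given by Lβ_R[-1] followed by ε_L R is an isomorphism of functors. -/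
/-!
Write `ψ_b = γ_R L ∘ R η_L : R b ⟶ C L b[1]` and `Φ : Hom(L F Y, Z) ≃ Hom(Y, R F Z)` for the
composite of the two adjunction bijections. The cotwist triangle says that `u : L F Y ⟶ Z` factors
through `ε_L` exactly when `γ_R ∘ Φ u = 0`, and naturality of `γ_R` gives
`γ_R ∘ Φ (p ∘ L ε_R) = C(p)[1] ∘ ψ_b`. As `ψ_b` is invertible and `C` is fully faithful, every map
out of `L F R b` is uniquely of the form `g ∘ ε_L + p ∘ L ε_R`; for uniqueness one also needs that
every composite `R b ⟶ C x ⟶ x` vanishes, which holds because `R b ≅ C L (b[1])` and `δ_R` is zero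
on the image of `L`. So `(ε_L, L ε_R) : L F R b ≅ R b ⊞ L b`. The same computation with
`p = L α_R` shows `L α_R = 0`, so the triangle `L F R b ⟶ L b ⟶ L T b ⟶ L F R b[1]` splits, and
its third map followed by the projection to `R b[1]` is an isomorphism.
-/

open CategoryTheory Category Limits Pretriangulated Preadditive

section

variable {A : Type*} [Category A] [Preadditive A] [HasZeroObject A] [HasShift A ℤ]
  [∀ n : ℤ, (shiftFunctor A n).Additive] [Pretriangulated A]

lemma isIso_mor₃_comp_shift_map_of_isIso_biprod_lift (T : Triangle A) (hT : T ∈ distTriang A)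
    (h₂ : T.mor₂ = 0) {Y : A} (e : T.obj₁ ⟶ Y) (he : IsIso (biprod.lift e T.mor₁)) :
    IsIso (T.mor₃ ≫ e⟦(1 : ℤ)⟧') := by
  -- the rotation of the split triangle `Y ⟶ Y ⊞ T.obj₂ ⟶ T.obj₂ ⟶ Y⟦1⟧`
  let T' : Triangle A :=
    { obj₁ := Y ⊞ T.obj₂
      obj₂ := T.obj₂
      obj₃ := Y⟦(1 : ℤ)⟧
      mor₁ := biprod.snd
      mor₂ := 0
      mor₃ := -biprod.inl⟦(1 : ℤ)⟧' }
  let φ : T ⟶ T' := Triangle.homMk _ _ (biprod.lift e T.mor₁) (𝟙 T.obj₂) (-(T.mor₃ ≫ e⟦(1 : ℤ)⟧'))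
    (by simp [T']) (by simp [T', h₂])
    (by simp [T', biprod.lift_eq, comp_distTriang_mor_zero₃₁_assoc _ hT])
  have : IsIso (-(T.mor₃ ≫ e⟦(1 : ℤ)⟧')) :=
    isIso₃_of_isIso₁₂ φ hT (rot_of_distTriang _ (binaryBiproductTriangle_distinguished _ _))
      he (inferInstanceAs (IsIso (𝟙 _)))
  simpa using (-asIso (-(T.mor₃ ≫ e⟦(1 : ℤ)⟧'))).isIso_hom

end

section

variable {A B : Type*} [Category A] [Category B] [Preadditive A] [Preadditive B]
  {F : A ⥤ B} {L R : B ⥤ A} [L.Additive] [F.Additive]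

def homAddEquivOfAdjunctions (adjL : L ⊣ F) (adjR : F ⊣ R) (Y Z : A) :
    (L.obj (F.obj Y) ⟶ Z) ≃+ (Y ⟶ R.obj (F.obj Z)) :=
  (adjL.homAddEquiv _ _).trans (adjR.homAddEquiv _ _)

variable (adjL : L ⊣ F) (adjR : F ⊣ R)

lemma homAddEquivOfAdjunctions_counit_comp {Y Z : A} (g : Y ⟶ Z) :
    homAddEquivOfAdjunctions adjL adjR Y Z (adjL.counit.app Y ≫ g) = g ≫ adjR.unit.app Z := by
  simp [homAddEquivOfAdjunctions, Adjunction.homEquiv_unit]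

lemma homAddEquivOfAdjunctions_map_counit_comp {Z : A} (b : B) (p : L.obj b ⟶ Z) :
    homAddEquivOfAdjunctions adjL adjR (R.obj b) Z (L.map (adjR.counit.app b) ≫ p) =
      R.map (adjL.unit.app b) ≫ R.map (F.map p) := by
  simp [homAddEquivOfAdjunctions, Adjunction.homEquiv_unit]

variable [HasShift A ℤ] {C : A ⥤ A} {γR : F ⋙ R ⟶ C ⋙ shiftFunctor A (1 : ℤ)}

lemma homAddEquivOfAdjunctions_map_counit_comp_comp {Z : A} (b : B) (p : L.obj b ⟶ Z) :
    homAddEquivOfAdjunctions adjL adjR (R.obj b) Z (L.map (adjR.counit.app b) ≫ p) ≫ γR.app Z =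
      (R.map (adjL.unit.app b) ≫ γR.app (L.obj b)) ≫ (C.map p)⟦(1 : ℤ)⟧' := by
  rw [homAddEquivOfAdjunctions_map_counit_comp, assoc, assoc]
  exact congrArg _ (γR.naturality p)

lemma map_eq_zero_of_counit_comp_eq_zero [C.Faithful] [C.PreservesZeroMorphisms] {b b' : B}
    [IsIso (R.map (adjL.unit.app b) ≫ γR.app (L.obj b))]
    (f : b ⟶ b') (hf : adjR.counit.app b ≫ f = 0) : L.map f = 0 := by
  have h := homAddEquivOfAdjunctions_map_counit_comp_comp adjL adjR (γR := γR) b (L.map f)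
  rwa [← L.map_comp, hf, L.map_zero, map_zero, zero_comp, eq_comm, IsIso.comp_left_eq_zero,
    Functor.map_eq_zero_iff, Functor.map_eq_zero_iff] at h

end

section

variable {A B : Type*} [Category A] [Category B] [Preadditive A] [HasZeroObject A]
  [HasShift A ℤ] [∀ n : ℤ, (shiftFunctor A n).Additive] [Pretriangulated A]
  {F : A ⥤ B} {L R : B ⥤ A} (adjL : L ⊣ F) (adjR : F ⊣ R)
  {C : A ⥤ A} {δR : C ⟶ 𝟭 A} {γR : F ⋙ R ⟶ C ⋙ shiftFunctor A (1 : ℤ)}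
  (hC : ∀ a : A, Triangle.mk (δR.app a) (adjR.unit.app a) (γR.app a) ∈ distTriang A)

include hC

lemma δ_app_obj_eq_zero (y : B) [IsIso (R.map (adjL.unit.app y) ≫ γR.app (L.obj y))] :
    δR.app (L.obj y) = 0 := by
  have h : γR.app (L.obj y) ≫ (δR.app (L.obj y))⟦(1 : ℤ)⟧' = 0 :=
    comp_distTriang_mor_zero₃₁ _ (hC (L.obj y))
  rw [← (shiftFunctor A (1 : ℤ)).map_eq_zero_iff,
    ← IsIso.comp_left_eq_zero (R.map (adjL.unit.app y) ≫ γR.app (L.obj y)), assoc, h, comp_zero]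

lemma eq_zero_of_comp_unit_eq_zero [HasShift B ℤ] [R.CommShift ℤ] [C.Full] {y : B} {x : A}
    (hcan : ∀ b : B, IsIso (R.map (adjL.unit.app b) ≫ γR.app (L.obj b)))
    (g : R.obj y ⟶ x) (hg : g ≫ adjR.unit.app x = 0) : g = 0 := by
  obtain ⟨w, rfl⟩ : ∃ w : R.obj y ⟶ C.obj x, g = w ≫ δR.app x :=
    Triangle.coyoneda_exact₂ _ (hC x) g hg
  have := hcan (y⟦(1 : ℤ)⟧)
  let e : C.obj (L.obj (y⟦(1 : ℤ)⟧)) ≅ R.obj y := (shiftFunctor A (1 : ℤ)).preimageIso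
    ((asIso (R.map (adjL.unit.app _) ≫ γR.app _)).symm ≪≫ (R.commShiftIso (1 : ℤ)).app y)
  obtain ⟨v, hv⟩ : ∃ v, C.map v = e.hom ≫ w := ⟨C.preimage _, C.map_preimage _⟩
  rw [← e.inv_hom_id_assoc w, ← hv, assoc, δR.naturality, δ_app_obj_eq_zero adjL adjR hC,
    zero_comp, comp_zero]

variable [Preadditive B] [L.Additive] [F.Additive]

lemma exists_counit_comp_eq_of_comp_eq_zero {Y Z : A} (u : L.obj (F.obj Y) ⟶ Z)
    (hu : homAddEquivOfAdjunctions adjL adjR Y Z u ≫ γR.app Z = 0) :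
    ∃ g : Y ⟶ Z, adjL.counit.app Y ≫ g = u := by
  obtain ⟨g, hg⟩ : ∃ g : Y ⟶ Z, _ = g ≫ adjR.unit.app Z :=
    Triangle.coyoneda_exact₃ _ (hC Z) _ hu
  exact ⟨g, (homAddEquivOfAdjunctions adjL adjR Y Z).injective
    (by rw [homAddEquivOfAdjunctions_counit_comp, hg])⟩

variable [C.Full] (hcan : ∀ b : B, IsIso (R.map (adjL.unit.app b) ≫ γR.app (L.obj b)))

include hcan

lemma exists_biprod_lift_counit_map_counit_comp_eq {b : B} {Z : A}
    (u : L.obj (F.obj (R.obj b)) ⟶ Z) :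
    ∃ k, biprod.lift (adjL.counit.app (R.obj b)) (L.map (adjR.counit.app b)) ≫ k = u := by
  have := hcan b
  let ψ := R.map (adjL.unit.app b) ≫ γR.app (L.obj b)
  let Φ := homAddEquivOfAdjunctions adjL adjR (R.obj b) Z
  obtain ⟨p, hp⟩ : ∃ p : L.obj b ⟶ Z, ψ ≫ (C.map p)⟦(1 : ℤ)⟧' = Φ u ≫ γR.app Z :=
    ⟨C.preimage ((shiftFunctor A (1 : ℤ)).preimage (inv ψ ≫ Φ u ≫ γR.app Z)), by simp⟩
  obtain ⟨g, hg⟩ := exists_counit_comp_eq_of_comp_eq_zero adjL adjR hC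
    (u - (L.map (adjR.counit.app b) ≫ p : L.obj (F.obj (R.obj b)) ⟶ Z)) (by
      rw [map_sub, sub_comp, homAddEquivOfAdjunctions_map_counit_comp_comp, hp, sub_self])
  exact ⟨biprod.desc g p, by rw [biprod.lift_desc, hg, sub_add_cancel]⟩

variable [HasShift B ℤ] [R.CommShift ℤ] [C.Faithful] [C.PreservesZeroMorphisms]

lemma eq_zero_of_biprod_lift_counit_map_counit_comp_eq_zero {b : B} {Z : A}
    (k : R.obj b ⊞ L.obj b ⟶ Z)
    (hk : biprod.lift (adjL.counit.app (R.obj b)) (L.map (adjR.counit.app b)) ≫ k = 0) :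
    k = 0 := by
  have := hcan b
  set g : R.obj b ⟶ Z := biprod.inl ≫ k
  set p : L.obj b ⟶ Z := biprod.inr ≫ k
  replace hk : (adjL.counit.app (R.obj b) ≫ g : L.obj (F.obj (R.obj b)) ⟶ Z) +
      (L.map (adjR.counit.app b) ≫ p : L.obj (F.obj (R.obj b)) ⟶ Z) = 0 := by
    simpa [biprod.lift_eq] using hk
  have hp : p = 0 := by
    have hγ : adjR.unit.app Z ≫ γR.app Z = 0 := comp_distTriang_mor_zero₂₃ _ (hC Z)
    have h := congrArg (fun u => homAddEquivOfAdjunctions adjL adjR (R.obj b) Z u ≫ γR.app Z) hk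
    rwa [map_add, add_comp, homAddEquivOfAdjunctions_counit_comp, assoc, hγ, comp_zero, zero_add,
      homAddEquivOfAdjunctions_map_counit_comp_comp, map_zero, zero_comp, IsIso.comp_left_eq_zero,
      Functor.map_eq_zero_iff, Functor.map_eq_zero_iff] at h
  have hg : g = 0 := by
    rw [hp, comp_zero, add_zero] at hk
    refine eq_zero_of_comp_unit_eq_zero adjL adjR hC hcan _ ?_
    rw [← homAddEquivOfAdjunctions_counit_comp adjL adjR, hk, map_zero]
  exact biprod.hom_ext' _ _ (by simpa using hg) (by simpa using hp)

lemma isIso_biprod_lift_counit_map_counit (b : B) :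
    IsIso (biprod.lift (adjL.counit.app (R.obj b)) (L.map (adjR.counit.app b))) := by
  have : Epi (biprod.lift (adjL.counit.app (R.obj b)) (L.map (adjR.counit.app b))) :=
    epi_of_cancel_zero _ fun k =>
      eq_zero_of_biprod_lift_counit_map_counit_comp_eq_zero adjL adjR hC hcan k
  exact isIso_of_coyoneda_map_bijective _ fun _ => ⟨fun _ _ h => (cancel_epi _).1 h,
    exists_biprod_lift_counit_map_counit_comp_eq adjL adjR hC hcan⟩

end

/-- The conclusion is the paper's isomorphism `L T[-1] ≅ R` shifted once. -/
theorem LT_iso_R_of_spherical {A B : Type*} [Category A] [Category B]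
    [HasShift A ℤ] [HasShift B ℤ] [Preadditive A] [Preadditive B]
    [HasZeroObject A] [HasZeroObject B]
    [∀ n : ℤ, (shiftFunctor A n).Additive] [∀ n : ℤ, (shiftFunctor B n).Additive]
    [Pretriangulated A] [Pretriangulated B]
    (F : A ⥤ B) [F.CommShift ℤ] [F.IsTriangulated]
    (L R : B ⥤ A) [L.CommShift ℤ] [L.IsTriangulated] [R.CommShift ℤ] [R.IsTriangulated]
    (adjL : L ⊣ F) (adjR : F ⊣ R)
    (C : A ⥤ A) [C.IsEquivalence]
    (δR : C ⟶ 𝟭 A) (γR : F ⋙ R ⟶ C ⋙ shiftFunctor A (1 : ℤ))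
    (hC : ∀ a : A, Triangle.mk (δR.app a) (adjR.unit.app a) (γR.app a) ∈ distTriang A)
    (T : B ⥤ B) (αR : 𝟭 B ⟶ T) (βR : T ⟶ (R ⋙ F) ⋙ shiftFunctor B (1 : ℤ))
    (hT : ∀ b : B, Triangle.mk (adjR.counit.app b) (αR.app b) (βR.app b) ∈ distTriang B)
    (hcan : ∀ b : B, IsIso (R.map (adjL.unit.app b) ≫ γR.app (L.obj b))) :
    ∀ b : B, IsIso (L.map (βR.app b) ≫
      (L.commShiftIso (1 : ℤ)).hom.app (F.obj (R.obj b)) ≫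
      ((adjL.counit.app (R.obj b))⟦(1 : ℤ)⟧')) := by
  intro b
  have := hcan b
  have hLα : L.map (αR.app b) = 0 := map_eq_zero_of_counit_comp_eq_zero adjL adjR (γR := γR)
    (αR.app b) (comp_distTriang_mor_zero₁₂ _ (hT b))
  rw [← assoc]
  exact isIso_mor₃_comp_shift_map_of_isIso_biprod_lift _ (L.map_distinguished _ (hT b)) hLα
    (adjL.counit.app (R.obj b)) (isIso_biprod_lift_counit_map_counit adjL adjR hC hcan b)
end

section
/- Let F : A ⥤ B be a spherical functor (the cotwist C is an autoequivalence and the canonical map R → RFL → CL[1] is an isomorphism). Then the natural transformation (Rη_L, η_R L) : R ⊕ L ⟶ RFL with components R →Rη_L RFL and L →η_R L RFL is an isomorphism of functors, and dually (ε_L R, Lε_R) : LFR ⟶ R ⊕ L is an isomorphism of functors. -/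
/-!
Evaluated at `L b`, the cotwist triangle `C → 𝟭 → RF → C[1]` receives the map `Rη_L : R b → RFL b`,
whose composite with the connecting morphism is the isomorphism `R b ≅ CL b[1]`; hence the triangle
splits and `(Rη_L, η_R L)` is an isomorphism. Evaluated at `R b` and rotated, the same triangle
splits through `Rε_R`, by the triangle identity `Rε_R ∘ η_R R = 1`, so `(γ_R R, Rε_R)` identifies
`RFR b` with `CR b[1] ⊕ R b`. Transporting along `R ≅ CL[1]` at `FR b` and at `b` turns this into
`C[1]` applied to `(ε_L R, Lε_R)`, which is therefore an isomorphism since `C[1]` is an equivalence.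
-/

open CategoryTheory Category Limits Pretriangulated

namespace CategoryTheory.Pretriangulated

variable {𝒞 : Type*} [Category 𝒞] [HasShift 𝒞 ℤ] [Preadditive 𝒞] [HasZeroObject 𝒞]
  [∀ n : ℤ, (shiftFunctor 𝒞 n).Additive] [Pretriangulated 𝒞] [HasBinaryBiproducts 𝒞]

lemma isIso_biprod_desc_of_distTriang {X₁ X₂ X₃ W : 𝒞} {f : X₁ ⟶ X₂} {g : X₂ ⟶ X₃}
    {h : X₃ ⟶ X₁⟦(1 : ℤ)⟧} (hT : Triangle.mk f g h ∈ distTriang 𝒞)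
    (q : W ⟶ X₃) (hq : IsIso (q ≫ h)) : IsIso (biprod.desc q g) := by
  have hgh : g ≫ h = 0 := comp_distTriang_mor_zero₂₃ _ hT
  have hhf : h ≫ f⟦(1 : ℤ)⟧' = 0 := comp_distTriang_mor_zero₃₁ _ hT
  let φ : binaryBiproductTriangle X₂ W ⟶ Triangle.mk g h (-f⟦(1 : ℤ)⟧') :=
    Triangle.homMk _ _ (𝟙 X₂) (biprod.desc g q) (q ≫ h)
      (by simp : biprod.inl ≫ biprod.desc g q = 𝟙 X₂ ≫ g)
      (by ext <;> simp [hgh] : biprod.snd ≫ q ≫ h = biprod.desc g q ≫ h)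
      (by simp [hhf] : (0 : W ⟶ X₂⟦(1 : ℤ)⟧) ≫ (𝟙 X₂)⟦(1 : ℤ)⟧' = (q ≫ h) ≫ (-f⟦(1 : ℤ)⟧'))
  have : IsIso (biprod.desc g q) := isIso₂_of_isIso₁₃ φ
    (binaryBiproductTriangle_distinguished _ _) (rot_of_distTriang _ hT)
    (inferInstanceAs (IsIso (𝟙 X₂))) hq
  have hswap : biprod.desc q g = (biprod.braiding W X₂).hom ≫ biprod.desc g q := by
    ext <;> simp
  rw [hswap]
  infer_instance

lemma isIso_biprod_lift_of_distTriang {X₁ X₂ X₃ W : 𝒞} {f : X₁ ⟶ X₂} {g : X₂ ⟶ X₃}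
    {h : X₃ ⟶ X₁⟦(1 : ℤ)⟧} (hT : Triangle.mk f g h ∈ distTriang 𝒞)
    (p : X₂ ⟶ W) (hp : IsIso (f ≫ p)) : IsIso (biprod.lift g p) := by
  have hfg : f ≫ g = 0 := comp_distTriang_mor_zero₁₂ _ hT
  have hhf : h ≫ f⟦(1 : ℤ)⟧' = 0 := comp_distTriang_mor_zero₃₁ _ hT
  let φ : Triangle.mk f g h ⟶ binaryBiproductTriangle W X₃ :=
    Triangle.homMk _ _ (f ≫ p) (biprod.lift p g) (𝟙 X₃)
      (by ext <;> simp [hfg] : f ≫ biprod.lift p g = (f ≫ p) ≫ biprod.inl)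
      (by simp : g ≫ 𝟙 X₃ = biprod.lift p g ≫ biprod.snd)
      (by simp [reassoc_of% hhf] : h ≫ (f ≫ p)⟦(1 : ℤ)⟧' = 𝟙 X₃ ≫ (0 : X₃ ⟶ W⟦(1 : ℤ)⟧))
  have : IsIso (biprod.lift p g) := isIso₂_of_isIso₁₃ φ hT
    (binaryBiproductTriangle_distinguished _ _) hp (inferInstanceAs (IsIso (𝟙 X₃)))
  have hswap : biprod.lift g p = biprod.lift p g ≫ (biprod.braiding W X₃).hom := by
    ext <;> simp
  rw [hswap]
  infer_instance

end CategoryTheory.Pretriangulated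

lemma CategoryTheory.Functor.isIso_biprodComparison {C D : Type*} [Category C] [Category D]
    [Preadditive C] [Preadditive D] [HasBinaryBiproducts C] [HasBinaryBiproducts D]
    (G : C ⥤ D) [G.Additive] (X Y : C) : IsIso (G.biprodComparison X Y) :=
  ⟨G.biprodComparison' X Y, by
    rw [biprodComparison, biprodComparison', biprod.lift_desc, ← G.map_comp, ← G.map_comp,
      ← G.map_add, biprod.total, G.map_id],
    G.biprodComparison'_comp_biprodComparison X Y⟩

namespace CategoryTheory.Adjunction

variable {A B : Type*} [Category A] [Category B] {F : A ⥤ B} {L R : B ⥤ A} {G : A ⥤ A}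

/-- For `G = C ⋙ shiftFunctor A 1` this is the canonical map `R → RFL → CL[1]`. -/
@[simps]
def unitWhiskerComp (adjL : L ⊣ F) (γ : F ⋙ R ⟶ G) : R ⟶ L ⋙ G where
  app b := R.map (adjL.unit.app b) ≫ γ.app (L.obj b)
  naturality b₁ b₂ t := by
    have := γ.naturality (L.map t)
    dsimp at this ⊢
    rw [← R.map_comp_assoc, ← adjL.unit_naturality, R.map_comp_assoc, this, assoc]

lemma unitWhiskerComp_app_obj_comp_map_counit (adjL : L ⊣ F) (γ : F ⋙ R ⟶ G) (X : A) :
    (adjL.unitWhiskerComp γ).app (F.obj X) ≫ G.map (adjL.counit.app X) = γ.app X := by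
  have := γ.naturality (adjL.counit.app X)
  dsimp at this
  rw [unitWhiskerComp_app, assoc, ← this, ← R.map_comp_assoc, right_triangle_components,
    R.map_id, id_comp]

lemma isIso_biprod_lift_counit_map [Preadditive A] [HasBinaryBiproducts A] [G.Additive]
    [G.ReflectsIsomorphisms] (adjL : L ⊣ F) (γ : F ⋙ R ⟶ G) {X : A} {b : B} (f : F.obj X ⟶ b)
    (hX : IsIso ((adjL.unitWhiskerComp γ).app (F.obj X)))
    (hb : IsIso ((adjL.unitWhiskerComp γ).app b))
    (hsplit : IsIso (biprod.lift (γ.app X) (R.map f))) :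
    IsIso (biprod.lift (adjL.counit.app X) (L.map f)) := by
  have key : (adjL.unitWhiskerComp γ).app (F.obj X) ≫
      G.map (biprod.lift (adjL.counit.app X) (L.map f)) ≫ G.biprodComparison X (L.obj b) =
      biprod.lift (γ.app X) (R.map f) ≫ biprod.map (𝟙 _) ((adjL.unitWhiskerComp γ).app b) := by
    ext
    · simpa [← G.map_comp] using adjL.unitWhiskerComp_app_obj_comp_map_counit γ X
    · simpa [← G.map_comp] using ((adjL.unitWhiskerComp γ).naturality f).symm
  have : IsIso (biprod.map (𝟙 (G.obj X)) ((adjL.unitWhiskerComp γ).app b)) :=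
    (biprod.mapIso (Iso.refl _) (asIso ((adjL.unitWhiskerComp γ).app b))).isIso_hom
  have := G.isIso_biprodComparison X (L.obj b)
  have : IsIso (G.map (biprod.lift (adjL.counit.app X) (L.map f))) := by
    rw [← IsIso.eq_inv_comp, ← IsIso.eq_comp_inv] at key
    rw [key]
    infer_instance
  exact isIso_of_reflects_iso _ G

end CategoryTheory.Adjunction

/-- Lemma 2.3(ii): let `F : A ⥤ B` be a spherical functor (the cotwist `C` is an
autoequivalence and the canonical map `R → RFL → CL[1]` is an isomorphism).  Then
`(Rη_L, η_R L) : R ⊕ L ⟶ RFL` and `(ε_L R, Lε_R) : LFR ⟶ R ⊕ L` are isomorphisms of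
functors (stated objectwise via binary biproducts). -/
theorem RFL_splits_of_spherical {A B : Type*} [Category A] [Category B]
    [HasShift A ℤ] [HasShift B ℤ] [Preadditive A] [Preadditive B]
    [HasZeroObject A] [HasZeroObject B]
    [∀ n : ℤ, (shiftFunctor A n).Additive] [∀ n : ℤ, (shiftFunctor B n).Additive]
    [Pretriangulated A] [Pretriangulated B] [HasBinaryBiproducts A]
    (F : A ⥤ B) [F.CommShift ℤ] [F.IsTriangulated]
    (L R : B ⥤ A) [L.CommShift ℤ] [L.IsTriangulated] [R.CommShift ℤ] [R.IsTriangulated]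
    (adjL : L ⊣ F) (adjR : F ⊣ R)
    (C : A ⥤ A) [C.IsEquivalence]
    (δR : C ⟶ 𝟭 A) (γR : F ⋙ R ⟶ C ⋙ shiftFunctor A (1 : ℤ))
    (hC : ∀ a : A, Triangle.mk (δR.app a) (adjR.unit.app a) (γR.app a) ∈ distTriang A)
    (T : B ⥤ B) (αR : 𝟭 B ⟶ T) (βR : T ⟶ (R ⋙ F) ⋙ shiftFunctor B (1 : ℤ))
    (hT : ∀ b : B, Triangle.mk (adjR.counit.app b) (αR.app b) (βR.app b) ∈ distTriang B)
    (hcan : ∀ b : B, IsIso (R.map (adjL.unit.app b) ≫ γR.app (L.obj b))) :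
    ∀ b : B,
      IsIso (biprod.desc (R.map (adjL.unit.app b)) (adjR.unit.app (L.obj b)) :
        R.obj b ⊞ L.obj b ⟶ R.obj (F.obj (L.obj b))) ∧
      IsIso (biprod.lift (adjL.counit.app (R.obj b)) (L.map (adjR.counit.app b)) :
        L.obj (F.obj (R.obj b)) ⟶ R.obj b ⊞ L.obj b) := by
  intro b
  have : C.Additive := Functor.additive_of_preserves_binary_products C
  refine ⟨isIso_biprod_desc_of_distTriang (hC (L.obj b)) _ (hcan b),
    adjL.isIso_biprod_lift_counit_map γR (adjR.counit.app b) (hcan _) (hcan b) ?_⟩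
  refine isIso_biprod_lift_of_distTriang (f := adjR.unit.app (R.obj b))
    (rot_of_distTriang _ (hC (R.obj b))) _ ?_
  rw [adjR.right_triangle_components]
  exact IsIso.id _
end

section
/- Let F : A ⥤ B be exact between triangulated categories with right adjoint R, and cotwist C with triangle C → id_A →η_R RF →γ_R C[1], twist T with triangle FR →ε_R id_B →α_R T →β_R FR[1]. Then there is a natural isomorphism TF[-1] ≅ FC[1] given by the composite TF[-1] →β_R F[-1] FRF →Fγ_R FC[1]. (This follows from the triangular identity εF ∘ Fη = id_F splitting FRF and the octahedral axiom.) -/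
/-!
By the triangle identity `F η_a ≫ ε_{F a} = 𝟙`, the map `F η_a` is a split mono with retraction
`ε_{F a}`; the triangle of `T` at `F a` is a cone of `ε_{F a}`, and the rotated image under `F`
of the triangle of `C` is a cone of `F η_a`. Given `f : X ⟶ Y` with retraction `g` and
distinguished triangles `X ⟶ Y ⟶ Kf ⟶ X⟦1⟧` on `f` and `Y ⟶ X ⟶ Kg ⟶ Y⟦1⟧` on `g`, the map
`β : Kg ⟶ Y⟦1⟧` is a mono onto the kernel of `g⟦1⟧`, `u⟦1⟧ : Y⟦1⟧ ⟶ Kf⟦1⟧` is an epi with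
kernel the image of `f⟦1⟧`, and `f⟦1⟧` splits `g⟦1⟧`; so `β ≫ u⟦1⟧` is mono and epi, hence
iso, pretriangulated categories being balanced.
-/

open CategoryTheory Category Limits Pretriangulated

section Retraction

variable {D : Type*} [Category D] [HasShift D ℤ] [Preadditive D] [HasZeroObject D]
  [∀ n : ℤ, (shiftFunctor D n).Additive] [Pretriangulated D]
  {X Y Kf Kg : D} {f : X ⟶ Y} {g : Y ⟶ X} {u : Y ⟶ Kf} {w : Kf ⟶ X⟦(1 : ℤ)⟧}
  {α : X ⟶ Kg} {β : Kg ⟶ Y⟦(1 : ℤ)⟧}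

lemma mono_comp_shift_of_retraction (hfg : f ≫ g = 𝟙 X)
    (hTf : Triangle.mk f u w ∈ distTriang D) (hTg : Triangle.mk g α β ∈ distTriang D) :
    Mono (β ≫ u⟦(1 : ℤ)⟧') := by
  have : Epi g := (IsSplitEpi.mk' ⟨f, hfg⟩).epi
  have : Mono β := Triangle.mono₃ _ hTg (Triangle.mor₂_eq_zero_of_epi₁ _ hTg this)
  refine Preadditive.mono_of_cancel_zero _ fun {W} φ hφ => ?_
  obtain ⟨θ, hθ⟩ : ∃ θ : W ⟶ X⟦(1 : ℤ)⟧, φ ≫ β = θ ≫ (-f⟦(1 : ℤ)⟧') :=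
    Triangle.coyoneda_exact₁ _ (rot_of_distTriang _ hTf) (φ ≫ β)
    ((assoc _ _ _).trans hφ)
  have hβg : β ≫ g⟦(1 : ℤ)⟧' = 0 := comp_distTriang_mor_zero₃₁ _ hTg
  have hθ0 : θ = 0 := by
    have h := hθ =≫ g⟦(1 : ℤ)⟧'
    simpa [← Functor.map_comp, hfg, hβg] using h.symm
  rw [← cancel_mono β, zero_comp]
  simpa [hθ0] using hθ

lemma epi_comp_shift_of_retraction (hfg : f ≫ g = 𝟙 X)
    (hTf : Triangle.mk f u w ∈ distTriang D) (hTg : Triangle.mk g α β ∈ distTriang D) :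
    Epi (β ≫ u⟦(1 : ℤ)⟧') := by
  have : Mono f := (IsSplitMono.mk' ⟨g, hfg⟩).mono
  have : Epi u := Triangle.epi₂ _ hTf (Triangle.mor₃_eq_zero_of_mono₁ _ hTf this)
  refine Preadditive.epi_of_cancel_zero _ fun {W} ψ hψ => ?_
  obtain ⟨θ, hθ⟩ : ∃ θ : X⟦(1 : ℤ)⟧ ⟶ W, u⟦(1 : ℤ)⟧' ≫ ψ = (-g⟦(1 : ℤ)⟧') ≫ θ :=
    Triangle.yoneda_exact₃ _ (rot_of_distTriang _ hTg) (u⟦(1 : ℤ)⟧' ≫ ψ)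
    ((assoc _ _ _).symm.trans hψ)
  have hfu : f ≫ u = 0 := comp_distTriang_mor_zero₁₂ _ hTf
  have hθ0 : θ = 0 := by
    have h := f⟦(1 : ℤ)⟧' ≫= hθ
    simpa [← Functor.map_comp_assoc, hfg, hfu] using h.symm
  rw [← cancel_epi (u⟦(1 : ℤ)⟧'), comp_zero]
  simpa [hθ0] using hθ

lemma isIso_comp_shift_of_retraction (hfg : f ≫ g = 𝟙 X)
    (hTf : Triangle.mk f u w ∈ distTriang D) (hTg : Triangle.mk g α β ∈ distTriang D) :
    IsIso (β ≫ u⟦(1 : ℤ)⟧') :=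
  have := mono_comp_shift_of_retraction hfg hTf hTg
  have := epi_comp_shift_of_retraction hfg hTf hTg
  isIso_of_mono_of_epi _

end Retraction

/-- Lemma 1.4: let `F : A ⥤ B` be exact with right adjoint `R`, cotwist `C` (triangle
`C → 𝟭 →η_R RF →γ_R C[1]`) and twist `T` (triangle `FR →ε_R 𝟭 →α_R T →β_R FR[1]`).
Then the composite `TF[-1] →β_R F[-1] FRF →Fγ_R FC[1]` is a natural isomorphism
`TF[-1] ≅ FC[1]` (stated here after shifting once: for every object `a` the composite
`TF(a) → (FRF(a))[1] → (FC(a)[1])[1]` is an isomorphism). -/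
theorem TF_iso_FC {A B : Type*} [Category A] [Category B]
    [HasShift A ℤ] [HasShift B ℤ] [Preadditive A] [Preadditive B]
    [HasZeroObject A] [HasZeroObject B]
    [∀ n : ℤ, (shiftFunctor A n).Additive] [∀ n : ℤ, (shiftFunctor B n).Additive]
    [Pretriangulated A] [Pretriangulated B]
    (F : A ⥤ B) [F.CommShift ℤ] [F.IsTriangulated]
    (R : B ⥤ A) [R.CommShift ℤ] [R.IsTriangulated]
    (adjR : F ⊣ R)
    (C : A ⥤ A) (δR : C ⟶ 𝟭 A) (γR : F ⋙ R ⟶ C ⋙ shiftFunctor A (1 : ℤ))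
    (hC : ∀ a : A, Triangle.mk (δR.app a) (adjR.unit.app a) (γR.app a) ∈ distTriang A)
    (T : B ⥤ B) (αR : 𝟭 B ⟶ T) (βR : T ⟶ (R ⋙ F) ⋙ shiftFunctor B (1 : ℤ))
    (hT : ∀ b : B, Triangle.mk (adjR.counit.app b) (αR.app b) (βR.app b) ∈ distTriang B) :
    ∀ a : A, IsIso (βR.app (F.obj a) ≫
      ((F.map (γR.app a) ≫ (F.commShiftIso (1 : ℤ)).hom.app (C.obj a))⟦(1 : ℤ)⟧')) := by
  intro a
  exact isIso_comp_shift_of_retraction (adjR.left_triangle_components a)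
    (rot_of_distTriang _ (F.map_distinguished _ (hC a))) (hT (F.obj a))
end
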